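/- arXiv:1306.2297 — 3 statements merged into one kernel-verified Lean document; each statement's English description precedes it below -/
import Mathlib

section
/- For the game $\dot x_1 = -v$, $\dot x_2 = 2u+v$, $u,v\in[-1,1]$, $t\in[0,1]$, with Hamiltonians defined via maximizers $\hat u, \hat v$: $\hat u(p_2)$ maximizes $p_2 u$ over $u\in[-1,1]$ and $\hat v(q_1,q_2)$ maximizes $(-q_1+q_2)v$ over $v\in[-1,1]$, the smooth functions $c_1^*(t,x)=x_1+(1-t)$, $c_2^*(t,x)=x_2+(1-t)$ do NOT satisfy the system of Hamilton–Jacobi equations $\partial_t\varphi_1 - p_1\hat v + p_2(2\hat u + \hat v)=0$, $\partial_t\varphi_2 - q_1\hat v + q_2(2\hat u + \hat v)=0$, where $p_j = \partial c_1^*/\partial x_j$, $q_j = \partial c_2^*/\partial x_j$. Specifically, with $p_1=1,p_2=0,q_1=0,q_2=1$, we have $\hat v = 1$ and the first equation evaluates to $-1 - 1 \ne 0$. -/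
open Set

/-- Example 1: the smooth pair `c₁*(t,x) = x₁ + (1-t)`, `c₂*(t,x) = x₂ + (1-t)` does not
satisfy the system of Hamilton–Jacobi equations.  Here `p₁ = 1`, `p₂ = 0`, `q₁ = 0`,
`q₂ = 1`, `∂c₁*/∂t = -1`; any maximizer `v̂` of `(-q₁+q₂)v` over `[-1,1]` equals `1`, and
the first Hamilton–Jacobi equation fails. -/
theorem example1_not_HJ_solution :
    ∀ vhat ∈ Icc (-1:ℝ) 1,
      (∀ v ∈ Icc (-1:ℝ) 1, (-(0:ℝ) + 1) * v ≤ (-(0:ℝ) + 1) * vhat) →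
      vhat = 1 ∧
        ∀ uhat : ℝ, (-1 : ℝ) - (1:ℝ) * vhat + (0:ℝ) * (2 * uhat + vhat) ≠ 0 := by
  intro vhat hv hmax
  have h1 := hmax 1 (by norm_num)
  have : vhat = 1 := le_antisymm hv.2 (by linarith)
  subst this
  refine ⟨rfl, fun uhat => by norm_num⟩
end

section
/- Consider the one-dimensional system $\dot x = u$, $t\in[0,1]$, $u\in[-1,1]$, with $\sigma_1(x)=|x|$ and $\sigma_2(x)=x$. Suppose $c_1,c_2:[0,1]\times\mathbb{R}\to\mathbb{R}$ satisfy: (F1) $c_1(1,x)=|x|$, $c_2(1,x)=x$; (F2) $c_1(t,x)\ge c_1(t_+, x+\int_t^{t_+}u(\theta)d\theta)$ for every measurable $u:[0,1]\to[-1,1]$ and $t_+\in[t,1]$; and (F4) for every $(t,x)$ there exists a measurable $u_*:[t,1]\to[-1,1]$ such that $c_1(t,x)=|x+\int_t^1 u_*|$ and $c_2(t,x)=x+\int_t^1 u_*$. Then necessarily $c_1(t,x)=|x|+(1-t)$ for all $(t,x)$, and $c_2(t,x)=x+(1-t)$ for $x>0$ while $c_2(t,x)=x-(1-t)$ for $x<0$.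 In particular, $c_2$ is discontinuous at every $(t,0)$ with $t<1$, so no continuous pair $(c_1,c_2)$ satisfies these conditions. -/
open Set MeasureTheory Filter

/-- Example 2 of the paper: for the system `ẋ = u`, `u ∈ [-1,1]`, with payoffs
`σ₁(x) = |x|`, `σ₂(x) = x`, any pair `(c₁, c₂)` satisfying (F1), (F2) and (F4) is
uniquely determined and `c₂` is necessarily discontinuous; hence no continuous value
function exists. -/
theorem example2_no_continuous_value
    (c₁ c₂ : ℝ → ℝ → ℝ)
    -- (F1) boundary conditions
    (hF1 : ∀ x : ℝ, c₁ 1 x = |x| ∧ c₂ 1 x = x)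
    -- (F2) monotonicity of `c₁` along all admissible motions
    (hF2 : ∀ t ∈ Icc (0:ℝ) 1, ∀ x : ℝ, ∀ tp ∈ Icc t 1, ∀ u : ℝ → ℝ,
      Measurable u → (∀ θ, u θ ∈ Icc (-1:ℝ) 1) →
      c₁ tp (x + ∫ θ in t..tp, u θ) ≤ c₁ t x)
    -- (F4) both values are kept along some motion
    (hF4 : ∀ t ∈ Icc (0:ℝ) 1, ∀ x : ℝ, ∃ u : ℝ → ℝ,
      Measurable u ∧ (∀ θ, u θ ∈ Icc (-1:ℝ) 1) ∧
      c₁ t x = |x + ∫ θ in t..1, u θ| ∧ c₂ t x = x + ∫ θ in t..1, u θ) :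
    (∀ t ∈ Icc (0:ℝ) 1, ∀ x : ℝ, c₁ t x = |x| + (1 - t)) ∧
    (∀ t ∈ Icc (0:ℝ) 1, ∀ x : ℝ, 0 < x → c₂ t x = x + (1 - t)) ∧
    (∀ t ∈ Icc (0:ℝ) 1, ∀ x : ℝ, x < 0 → c₂ t x = x - (1 - t)) ∧
    (∀ t ∈ Ico (0:ℝ) 1, ¬ ContinuousAt (fun p : ℝ × ℝ => c₂ p.1 p.2) (t, 0)) := by
  -- Step 1: c₁ is determined.
  have key : ∀ t ∈ Icc (0:ℝ) 1, ∀ x : ℝ, c₁ t x = |x| + (1 - t) := by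
    intro t ht x
    obtain ⟨ht0, ht1⟩ := ht
    -- lower bound, via the constant control of sign x
    have hlow : |x| + (1 - t) ≤ c₁ t x := by
      set s : ℝ := if 0 ≤ x then 1 else -1 with hs
      have hsmem : ∀ θ : ℝ, (fun _ : ℝ => s) θ ∈ Icc (-1:ℝ) 1 := by
        intro θ; simp only [hs]; split <;> norm_num
      have h2 := hF2 t ⟨ht0, ht1⟩ x 1 ⟨ht1, le_refl 1⟩ (fun _ => s)
        measurable_const hsmem
      have hint : (∫ _ in t..(1:ℝ), s) = s * (1 - t) := by
        simp [intervalIntegral.integral_const, smul_eq_mul, mul_comm]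
      rw [hint, (hF1 (x + s * (1 - t))).1] at h2
      have habs : |x + s * (1 - t)| = |x| + (1 - t) := by
        rcases le_or_gt 0 x with hx | hx
        · have : s = 1 := by simp [hs, hx]
          rw [this, abs_of_nonneg hx, abs_of_nonneg (by linarith), one_mul]
        · have : s = -1 := by simp [hs, not_le.mpr hx]
          rw [this, abs_of_neg hx, abs_of_nonpos (by nlinarith)]
          ring
      linarith [habs ▸ h2]
    -- upper bound, from (F4)
    obtain ⟨u, hmu, hmem, hc1, _⟩ := hF4 t ⟨ht0, ht1⟩ x
    have hbound : |∫ θ in t..1, u θ| ≤ 1 - t := by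
      have := intervalIntegral.norm_integral_le_of_norm_le_const
        (a := t) (b := 1) (C := 1) (f := u)
        (fun θ _ => by
          have := hmem θ
          rw [Real.norm_eq_abs, abs_le]; exact ⟨this.1, this.2⟩)
      rw [Real.norm_eq_abs] at this
      calc |∫ θ in t..1, u θ| ≤ 1 * |1 - t| := this
        _ = 1 - t := by rw [one_mul, abs_of_nonneg (by linarith)]
    have hup : c₁ t x ≤ |x| + (1 - t) := by
      rw [hc1]
      calc |x + ∫ θ in t..1, u θ| ≤ |x| + |∫ θ in t..1, u θ| := abs_add_le _ _
        _ ≤ |x| + (1 - t) := by linarith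
    linarith
  -- Step 2: c₂ for positive and negative x.
  have keyp : ∀ t ∈ Icc (0:ℝ) 1, ∀ x : ℝ, 0 < x → c₂ t x = x + (1 - t) := by
    intro t ht x hx
    obtain ⟨u, hmu, hmem, hc1, hc2⟩ := hF4 t ht x
    set I : ℝ := ∫ θ in t..1, u θ with hI
    have hbound : |I| ≤ 1 - t := by
      have := intervalIntegral.norm_integral_le_of_norm_le_const
        (a := t) (b := 1) (C := 1) (f := u)
        (fun θ _ => by
          have := hmem θ
          rw [Real.norm_eq_abs, abs_le]; exact ⟨this.1, this.2⟩)
      rw [Real.norm_eq_abs] at this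
      calc |I| ≤ 1 * |1 - t| := this
        _ = 1 - t := by rw [one_mul, abs_of_nonneg (by linarith [ht.2])]
    have heq : |x + I| = |x| + (1 - t) := by rw [← hc1, key t ht x]
    rw [abs_of_pos hx] at heq
    have hIle : I ≤ 1 - t := (abs_le.mp hbound).2
    have hIge : -(1 - t) ≤ I := (abs_le.mp hbound).1
    have : x + I = x + (1 - t) := by
      rcases abs_cases (x + I) with ⟨h, _⟩ | ⟨h, _⟩
      · linarith
      · exfalso; nlinarith
    rw [hc2, this]
  have keyn : ∀ t ∈ Icc (0:ℝ) 1, ∀ x : ℝ, x < 0 → c₂ t x = x - (1 - t) := by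
    intro t ht x hx
    obtain ⟨u, hmu, hmem, hc1, hc2⟩ := hF4 t ht x
    set I : ℝ := ∫ θ in t..1, u θ with hI
    have hbound : |I| ≤ 1 - t := by
      have := intervalIntegral.norm_integral_le_of_norm_le_const
        (a := t) (b := 1) (C := 1) (f := u)
        (fun θ _ => by
          have := hmem θ
          rw [Real.norm_eq_abs, abs_le]; exact ⟨this.1, this.2⟩)
      rw [Real.norm_eq_abs] at this
      calc |I| ≤ 1 * |1 - t| := this
        _ = 1 - t := by rw [one_mul, abs_of_nonneg (by linarith [ht.2])]
    have heq : |x + I| = |x| + (1 - t) := by rw [← hc1, key t ht x]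
    rw [abs_of_neg hx] at heq
    have hIle : I ≤ 1 - t := (abs_le.mp hbound).2
    have hIge : -(1 - t) ≤ I := (abs_le.mp hbound).1
    have : x + I = x - (1 - t) := by
      rcases abs_cases (x + I) with ⟨h, _⟩ | ⟨h, _⟩
      · exfalso; nlinarith
      · linarith
    rw [hc2, this]
  refine ⟨key, keyp, keyn, ?_⟩
  -- Step 3: discontinuity.
  intro t ht hcont
  obtain ⟨ht0, ht1⟩ := ht
  have htIcc : t ∈ Icc (0:ℝ) 1 := ⟨ht0, le_of_lt ht1⟩
  have hseq : Tendsto (fun n : ℕ => (1:ℝ) / (n + 1)) atTop (nhds 0) :=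
    tendsto_one_div_add_atTop_nhds_zero_nat
  have hpos : ∀ n : ℕ, (0:ℝ) < 1 / (n + 1) := fun n => by positivity
  -- approach from the right
  have h1 : Tendsto (fun n : ℕ => ((t, 1 / (n + 1)) : ℝ × ℝ)) atTop (nhds (t, 0)) :=
    tendsto_const_nhds.prodMk_nhds hseq
  have h1' : Tendsto (fun n : ℕ => c₂ t (1 / (n + 1))) atTop (nhds (c₂ t 0)) :=
    hcont.tendsto.comp h1
  have h1'' : Tendsto (fun n : ℕ => c₂ t (1 / (n + 1))) atTop (nhds (1 - t)) := by
    have : (fun n : ℕ => c₂ t (1 / (n + 1))) =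
        fun n : ℕ => 1 / (n + 1) + (1 - t) := by
      funext n; exact keyp t htIcc _ (hpos n)
    rw [this]
    have := hseq.add (tendsto_const_nhds (x := (1 - t : ℝ)))
    simpa using this
  have e1 : c₂ t 0 = 1 - t := tendsto_nhds_unique h1' h1''
  -- approach from the left
  have hseq' : Tendsto (fun n : ℕ => -((1:ℝ) / (n + 1))) atTop (nhds 0) := by
    simpa using hseq.neg
  have h2 : Tendsto (fun n : ℕ => ((t, -(1 / (n + 1))) : ℝ × ℝ)) atTop (nhds (t, 0)) :=
    tendsto_const_nhds.prodMk_nhds hseq'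
  have h2' : Tendsto (fun n : ℕ => c₂ t (-(1 / (n + 1)))) atTop (nhds (c₂ t 0)) :=
    hcont.tendsto.comp h2
  have h2'' : Tendsto (fun n : ℕ => c₂ t (-(1 / (n + 1)))) atTop (nhds (-(1 - t))) := by
    have : (fun n : ℕ => c₂ t (-(1 / (n + 1)))) =
        fun n : ℕ => -(1 / (n + 1)) - (1 - t) := by
      funext n; exact keyn t htIcc _ (by linarith [hpos n])
    rw [this]
    have := hseq'.sub (tendsto_const_nhds (x := (1 - t : ℝ)))
    simpa using this
  have e2 : c₂ t 0 = -(1 - t) := tendsto_nhds_unique h2' h2''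
  rw [e1] at e2
  linarith
end

section
/- Let $X$ be a normed space and $\{A_j\}$ a sequence of closed subsets of $X$ such that for each $\nu\in\mathbb{N}$, the truncations $A_j \cap \bar B(0,\nu+1)$ converge in the Hausdorff metric to a compact set $R_\nu$, where $\bar B(0,r)$ denotes the closed ball. Then for $r > \nu$: $R_r \cap \bar B(0,\nu) = R_\nu \cap \bar B(0,\nu)$. -/
open Filter Topology

lemma localized_hausdorff_key
    {X : Type*} [NormedAddCommGroup X]
    (A : ℕ → Set X)
    (R : ℕ → Set X) (hR : ∀ ν, IsCompact (R ν)) (hRne : ∀ ν, (R ν).Nonempty)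
    (hAne : ∀ ν j, (A j ∩ Metric.closedBall 0 ((ν : ℝ) + 1)).Nonempty)
    (hconv : ∀ ν : ℕ, Tendsto
      (fun j => Metric.hausdorffDist (A j ∩ Metric.closedBall 0 ((ν : ℝ) + 1)) (R ν))
      atTop (𝓝 0))
    (s t ν : ℕ) (ht : ν ≤ t) {x : X}
    (hx : x ∈ R s) (hxν : x ∈ Metric.closedBall 0 (ν : ℝ)) : x ∈ R t := by
  have hfin : ∀ (c : ℕ) (j : ℕ), EMetric.hausdorffEdist
      (A j ∩ Metric.closedBall 0 ((c : ℝ) + 1)) (R c) ≠ ⊤ := fun c j =>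
    Metric.hausdorffEdist_ne_top_of_nonempty_of_bounded (hAne c j) (hRne c)
      (Metric.isBounded_closedBall.subset Set.inter_subset_right) (hR c).isBounded
  have hzero : Metric.infDist x (R t) = 0 := by
    refine le_antisymm (le_of_forall_pos_le_add fun ε hε => ?_) Metric.infDist_nonneg
    set ε' : ℝ := min (ε / 2) (1 / 2) with hε'def
    have hε' : 0 < ε' := lt_min (by linarith) (by norm_num)
    have hev : ∀ᶠ j in atTop,
        Metric.hausdorffDist (A j ∩ Metric.closedBall 0 ((s : ℝ) + 1)) (R s) < ε' ∧
        Metric.hausdorffDist (A j ∩ Metric.closedBall 0 ((t : ℝ) + 1)) (R t) < ε' :=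
      ((hconv s).eventually (gt_mem_nhds hε')).and
        ((hconv t).eventually (gt_mem_nhds hε'))
    obtain ⟨j, hjs, hjt⟩ := hev.exists
    -- find y ∈ A j ∩ B̄(0, s+1) close to x
    have hjs' : Metric.hausdorffDist (R s) (A j ∩ Metric.closedBall 0 ((s : ℝ) + 1)) < ε' := by
      rwa [Metric.hausdorffDist_comm]
    obtain ⟨y, hy, hxy⟩ := Metric.exists_dist_lt_of_hausdorffDist_lt hx hjs'
      (by rw [EMetric.hausdorffEdist_comm]; exact hfin s j)
    -- y is in the smaller ball B̄(0, t+1)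
    have hx0 : dist x 0 ≤ (ν : ℝ) := Metric.mem_closedBall.mp hxν
    have hyt : y ∈ Metric.closedBall 0 ((t : ℝ) + 1) := by
      rw [Metric.mem_closedBall]
      have h1 : dist y 0 ≤ dist y x + dist x 0 := dist_triangle y x 0
      have h2 : ε' ≤ 1 / 2 := min_le_right _ _
      have h3 : (ν : ℝ) ≤ (t : ℝ) := Nat.cast_le.mpr ht
      have : dist y x < ε' := by rwa [dist_comm]
      linarith
    have hyA : y ∈ A j ∩ Metric.closedBall 0 ((t : ℝ) + 1) := ⟨hy.1, hyt⟩
    have h4 : Metric.infDist y (R t) ≤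
        Metric.hausdorffDist (A j ∩ Metric.closedBall 0 ((t : ℝ) + 1)) (R t) :=
      Metric.infDist_le_hausdorffDist_of_mem hyA (hfin t j)
    have h5 : Metric.infDist x (R t) ≤ Metric.infDist y (R t) + dist x y :=
      Metric.infDist_le_infDist_add_dist
    have h6 : ε' ≤ ε / 2 := min_le_left _ _
    linarith
  exact ((hR t).isClosed.mem_iff_infDist_zero (hRne t)).mpr hzero

/-- Lemma 5 of the paper: the localized Hausdorff limits obtained by truncating at
different radii agree on the smaller ball. -/
theorem localized_hausdorff_limits_agree
    {X : Type*} [NormedAddCommGroup X]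
    (A : ℕ → Set X) (hA : ∀ j, IsClosed (A j))
    (R : ℕ → Set X) (hR : ∀ ν, IsCompact (R ν)) (hRne : ∀ ν, (R ν).Nonempty)
    (hAne : ∀ ν j, (A j ∩ Metric.closedBall 0 ((ν : ℝ) + 1)).Nonempty)
    (hconv : ∀ ν : ℕ, Tendsto
      (fun j => Metric.hausdorffDist (A j ∩ Metric.closedBall 0 ((ν : ℝ) + 1)) (R ν))
      atTop (𝓝 0)) :
    ∀ r ν : ℕ, ν < r →
      R r ∩ Metric.closedBall 0 (ν : ℝ) = R ν ∩ Metric.closedBall 0 (ν : ℝ) := by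
  intro r ν hνr
  ext x
  constructor
  · rintro ⟨hx, hxb⟩
    exact ⟨localized_hausdorff_key A R hR hRne hAne hconv r ν ν le_rfl hx hxb, hxb⟩
  · rintro ⟨hx, hxb⟩
    exact ⟨localized_hausdorff_key A R hR hRne hAne hconv ν r ν hνr.le hx hxb, hxb⟩
end
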